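/- The pointwise-threshold policy p_i^c + p_i^r = N_0(e^R − 1)/F^{-1}(ε) for every slot, with the renewable part chosen greedily (p_k^r = min{N_0(e^R−1)/F^{-1}(ε), ∑_{i=1}^k T_i − ∑_{i=1}^{k−1} p_i^r} and p_k^c the remainder), is optimal for the per-slot outage-probability-constrained cost minimization problem. -/

import Mathlib

/-!
The outage constraint of a slot only depends on its total power `s`, and since
`ln (1 + g s / N₀) < R ↔ g < N₀ (e^R − 1) / s`, its outage probability is `F (N₀ (e^R − 1) / s)`.
Strict monotonicity of `F` therefore turns the constraint into the threshold `s ≥ P`, with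
`P = N₀ (e^R − 1) / F⁻¹(ε)`. With total power `P` in every slot the cost is
`∑ (α P − (α − β) pᵣ)`, so the cheapest feasible policy maximises the renewable energy it uses;
the greedy rule keeps every partial sum of renewable power as large as the causality constraint
allows, and any other policy uses at most `min qᵣ P` of useful renewable power per slot.
-/

open MeasureTheory Finset

section Greedy

variable {P : ℝ} {T pr : ℕ → ℝ}

theorem greedy_sum_range_succ
    (hpr : ∀ i, pr i = min P ((∑ j ∈ range (i + 1), T j) - ∑ j ∈ range i, pr j)) (k : ℕ) :
    ∑ j ∈ range (k + 1), pr j = min (∑ j ∈ range k, pr j + P) (∑ j ∈ range (k + 1), T j) := by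
  rw [sum_range_succ, hpr k, ← min_add_add_left, add_sub_cancel]

theorem greedy_sum_le_sum
    (hpr : ∀ i, pr i = min P ((∑ j ∈ range (i + 1), T j) - ∑ j ∈ range i, pr j)) (k : ℕ) :
    ∑ j ∈ range k, pr j ≤ ∑ j ∈ range k, T j := by
  cases k with
  | zero => simp
  | succ k => exact (greedy_sum_range_succ hpr k).trans_le (min_le_right _ _)

theorem greedy_nonneg (hP : 0 ≤ P) (hT : ∀ i, 0 ≤ T i)
    (hpr : ∀ i, pr i = min P ((∑ j ∈ range (i + 1), T j) - ∑ j ∈ range i, pr j)) (i : ℕ) :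
    0 ≤ pr i := by
  rw [hpr i, sum_range_succ]
  exact le_min hP (by linarith [greedy_sum_le_sum hpr i, hT i])

theorem sum_le_greedy_sum
    (hpr : ∀ i, pr i = min P ((∑ j ∈ range (i + 1), T j) - ∑ j ∈ range i, pr j))
    {q : ℕ → ℝ} (hq : ∀ i, q i ≤ P) {N : ℕ}
    (hqT : ∀ k ≤ N, ∑ j ∈ range k, q j ≤ ∑ j ∈ range k, T j) :
    ∀ k ≤ N, ∑ j ∈ range k, q j ≤ ∑ j ∈ range k, pr j := by
  intro k hk
  induction k with
  | zero => simp
  | succ k ih =>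
    rw [greedy_sum_range_succ hpr, sum_range_succ]
    exact le_min (add_le_add (ih (by omega)) (hq k)) (sum_range_succ q k ▸ hqT (k + 1) hk)

theorem slot_cost_ge {α β P c r : ℝ} (hβ : 0 ≤ β) (hαβ : β ≤ α) (hc : 0 ≤ c)
    (hP : P ≤ c + r) : α * P - (α - β) * min r P ≤ α * c + β * r := by
  rcases le_total r P with h | h
  · rw [min_eq_left h]
    nlinarith
  · rw [min_eq_right h]
    nlinarith

theorem greedy_cost_le
    (hpr : ∀ i, pr i = min P ((∑ j ∈ range (i + 1), T j) - ∑ j ∈ range i, pr j))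
    {pc : ℕ → ℝ} (hpc : ∀ i, pc i = P - pr i) {α β : ℝ} (hβ : 0 ≤ β) (hαβ : β ≤ α)
    {N : ℕ} {qc qr : ℕ → ℝ} (hqc : ∀ i, 0 ≤ qc i) (hqP : ∀ i < N, P ≤ qc i + qr i)
    (hqT : ∀ k ≤ N, ∑ j ∈ range k, qr j ≤ ∑ j ∈ range k, T j) :
    ∑ i ∈ range N, (α * pc i + β * pr i) ≤ ∑ i ∈ range N, (α * qc i + β * qr i) := by
  have huseful : ∑ i ∈ range N, min (qr i) P ≤ ∑ i ∈ range N, pr i :=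
    sum_le_greedy_sum hpr (fun i => min_le_right _ _)
      (fun k hk => (sum_le_sum fun j _ => min_le_left _ _).trans (hqT k hk)) N le_rfl
  calc ∑ i ∈ range N, (α * pc i + β * pr i)
      = ∑ i ∈ range N, (α * P - (α - β) * pr i) :=
        sum_congr rfl fun i _ => by rw [hpc i]; ring
    _ ≤ ∑ i ∈ range N, (α * P - (α - β) * min (qr i) P) := by
        have := mul_le_mul_of_nonneg_left huseful (sub_nonneg.2 hαβ)
        rw [mul_sum, mul_sum] at this
        simp only [sum_sub_distrib]
        linarith
    _ ≤ ∑ i ∈ range N, (α * qc i + β * qr i) :=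
        sum_le_sum fun i hi => slot_cost_ge hβ hαβ (hqc i) (hqP i (mem_range.1 hi))

end Greedy

theorem log_one_add_mul_div_lt_iff {x s N0 R : ℝ} (hx : 0 ≤ x) (hs : 0 < s) (hN0 : 0 < N0) :
    Real.log (1 + x * s / N0) < R ↔ x < N0 * (Real.exp R - 1) / s := by
  rw [Real.log_lt_iff_lt_exp (by positivity), ← lt_sub_iff_add_lt', div_lt_iff₀ hN0,
    lt_div_iff₀ hs, mul_comm (Real.exp R - 1)]

theorem outage_prob_eq {Ω : Type*} [MeasurableSpace Ω] {μ : Measure Ω} {g : Ω → ℝ}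
    (hg : ∀ ω, 0 < g ω) {F : ℝ → ℝ} (hF : ∀ t, 0 < t → (μ {ω | g ω < t}).toReal = F t)
    {N0 R s : ℝ} (hN0 : 0 < N0) (hR : 0 < R) (hs : 0 < s) :
    (μ {ω | Real.log (1 + g ω * s / N0) < R}).toReal = F (N0 * (Real.exp R - 1) / s) := by
  have hexp : 0 < Real.exp R - 1 := sub_pos.2 (Real.one_lt_exp_iff.2 hR)
  simp_rw [log_one_add_mul_div_lt_iff (hg _).le hs hN0]
  exact hF _ (by positivity)

theorem threshold_le_of_outage_prob_le {Ω : Type*} [MeasurableSpace Ω] {μ : Measure Ω}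
    [IsProbabilityMeasure μ] {g : Ω → ℝ} (hg : ∀ ω, 0 < g ω) {F : ℝ → ℝ}
    (hF : ∀ t, 0 < t → (μ {ω | g ω < t}).toReal = F t) (hFmono : StrictMonoOn F (Set.Ioi 0))
    {N0 R ε Finv s : ℝ} (hN0 : 0 < N0) (hR : 0 < R) (hε : ε < 1)
    (hFinv : 0 < Finv) (hFval : F Finv = ε) (hs : 0 ≤ s)
    (hout : (μ {ω | Real.log (1 + g ω * s / N0) < R}).toReal ≤ ε) :
    N0 * (Real.exp R - 1) / Finv ≤ s := by
  rcases hs.eq_or_lt with rfl | hs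
  · have hall : {ω | Real.log (1 + g ω * 0 / N0) < R} = Set.univ := by simp [hR]
    rw [hall, measure_univ, ENNReal.toReal_one] at hout
    linarith
  · have hexp : 0 < Real.exp R - 1 := sub_pos.2 (Real.one_lt_exp_iff.2 hR)
    by_contra! hlt
    have hFinv_lt : Finv < N0 * (Real.exp R - 1) / s :=
      (lt_div_iff₀' hs).2 ((lt_div_iff₀ hFinv).1 hlt)
    have := hFmono hFinv (show (0 : ℝ) < _ by positivity) hFinv_lt
    rw [hFval, ← outage_prob_eq hg hF hN0 hR hs] at this
    linarith

theorem threshold_greedy_policy_optimal_general {Ω : Type*} [MeasurableSpace Ω]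
    (μ : Measure Ω) [IsProbabilityMeasure μ]
    (g : Ω → ℝ) (hg : ∀ ω, 0 < g ω)
    (F : ℝ → ℝ)
    (hF : ∀ t, 0 < t → (μ {ω | g ω < t}).toReal = F t)
    (hFmono : StrictMonoOn F (Set.Ioi (0 : ℝ)))
    (N0 R ε : ℝ) (hN0 : 0 < N0) (hR : 0 < R) (hε : ε ∈ Set.Ioo (0 : ℝ) 1)
    (Finv : ℝ) (hFinv : 0 < Finv) (hFval : F Finv = ε)
    (N : ℕ) (α β : ℝ) (hβ : 0 ≤ β) (hαβ : β < α)
    (T : ℕ → ℝ) (hT : ∀ i, 0 ≤ T i)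
    (pr : ℕ → ℝ)
    (hpr : ∀ i, pr i = min (N0 * (Real.exp R - 1) / Finv)
      ((∑ j ∈ Finset.range (i+1), T j) - ∑ j ∈ Finset.range i, pr j))
    (pc : ℕ → ℝ)
    (hpc : ∀ i, pc i = N0 * (Real.exp R - 1) / Finv - pr i) :
    ((∀ i, 0 ≤ pc i) ∧ (∀ i, 0 ≤ pr i) ∧
      (∀ k ≤ N, ∑ j ∈ Finset.range k, pr j ≤ ∑ j ∈ Finset.range k, T j) ∧
      (∀ i < N,
        (μ {ω | Real.log (1 + g ω * (pc i + pr i) / N0) < R}).toReal ≤ ε)) ∧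
    ∀ qc qr : ℕ → ℝ, (∀ i, 0 ≤ qc i) → (∀ i, 0 ≤ qr i) →
      (∀ k ≤ N, ∑ j ∈ Finset.range k, qr j ≤ ∑ j ∈ Finset.range k, T j) →
      (∀ i < N,
        (μ {ω | Real.log (1 + g ω * (qc i + qr i) / N0) < R}).toReal ≤ ε) →
      ∑ i ∈ Finset.range N, (α * pc i + β * pr i) ≤
        ∑ i ∈ Finset.range N, (α * qc i + β * qr i) := by
  set P := N0 * (Real.exp R - 1) / Finv with hPdef
  have hexp : 0 < Real.exp R - 1 := sub_pos.2 (Real.one_lt_exp_iff.2 hR)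
  have hP : 0 < P := by positivity
  have htotal : ∀ i, pc i + pr i = P := fun i => by rw [hpc i]; ring
  have houtP : (μ {ω | Real.log (1 + g ω * P / N0) < R}).toReal = ε := by
    rw [outage_prob_eq hg hF hN0 hR hP, hPdef, div_div_cancel₀ (by positivity), hFval]
  refine ⟨⟨fun i => ?_, greedy_nonneg hP.le hT hpr, fun k _ => greedy_sum_le_sum hpr k,
    fun i _ => by rw [htotal, houtP]⟩, fun qc qr hqc hqr hqT hqout => ?_⟩
  · rw [hpc i, sub_nonneg]
    exact (hpr i).trans_le (min_le_left _ _)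
  · refine greedy_cost_le hpr hpc hβ hαβ.le hqc (fun i hi => ?_) hqT
    exact threshold_le_of_outage_prob_le hg hF hFmono hN0 hR hε.2 hFinv hFval
      (add_nonneg (hqc i) (hqr i)) (hqout i hi)

/-- The pointwise-threshold policy `p_i^c + p_i^r = N₀(e^R − 1)/F⁻¹(ε)` with the
renewable part chosen greedily is optimal for the per-slot
outage-probability-constrained cost minimization problem. -/
theorem threshold_greedy_policy_optimal {Ω : Type*} [MeasurableSpace Ω]
    (μ : Measure Ω) [IsProbabilityMeasure μ]
    (g : Ω → ℝ) (hg : ∀ ω, 0 < g ω)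
    (F : ℝ → ℝ)
    (hF : ∀ t, 0 < t → (μ {ω | g ω < t}).toReal = F t)
    (hFmono : StrictMonoOn F (Set.Ioi (0 : ℝ)))
    (N0 R ε : ℝ) (hN0 : 0 < N0) (hR : 0 < R) (hε : ε ∈ Set.Ioo (0 : ℝ) 1)
    (Finv : ℝ) (hFinv : 0 < Finv) (hFval : F Finv = ε)
    (N : ℕ) (hN : 0 < N) (α β : ℝ) (hβ : 0 ≤ β) (hαβ : β < α)
    (T : ℕ → ℝ) (hT : ∀ i, 0 ≤ T i)
    (pr : ℕ → ℝ)
    (hpr : ∀ i, pr i = min (N0 * (Real.exp R - 1) / Finv)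
      ((∑ j ∈ Finset.range (i+1), T j) - ∑ j ∈ Finset.range i, pr j))
    (pc : ℕ → ℝ)
    (hpc : ∀ i, pc i = N0 * (Real.exp R - 1) / Finv - pr i) :
    ((∀ i, 0 ≤ pc i) ∧ (∀ i, 0 ≤ pr i) ∧
      (∀ k ≤ N, ∑ j ∈ Finset.range k, pr j ≤ ∑ j ∈ Finset.range k, T j) ∧
      (∀ i < N,
        (μ {ω | Real.log (1 + g ω * (pc i + pr i) / N0) < R}).toReal ≤ ε)) ∧
    ∀ qc qr : ℕ → ℝ, (∀ i, 0 ≤ qc i) → (∀ i, 0 ≤ qr i) →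
      (∀ k ≤ N, ∑ j ∈ Finset.range k, qr j ≤ ∑ j ∈ Finset.range k, T j) →
      (∀ i < N,
        (μ {ω | Real.log (1 + g ω * (qc i + qr i) / N0) < R}).toReal ≤ ε) →
      ∑ i ∈ Finset.range N, (α * pc i + β * pr i) ≤
        ∑ i ∈ Finset.range N, (α * qc i + β * qr i) :=
  threshold_greedy_policy_optimal_general μ g hg F hF hFmono N0 R ε hN0 hR hε Finv hFinv hFval N α β
    hβ hαβ T hT pr hpr pc hpc
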